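/- arXiv:2602.01522 — 2 statements merged into one kernel-verified Lean document; each statement's English description precedes it below -/
import Mathlib

section
/- Let d ≥ 2, let u be a fixed unit vector in ℝ^d, and let b be a random vector distributed according to the uniform probability measure on the unit sphere S^{d-1}. Then for every ε > 0, the probability that |⟨u, b⟩| exceeds ε satisfies P(|⟨u, b⟩| > ε) ≤ 2 · exp(−(d−1)ε²/2). -/
/-!
For `0 < ε ≤ 1`, the cone `(0, 1) • C` over the cap `C = {v ∈ S^{d-1} | ε ≤ ⟪u, v⟫}` lies in a
ball of radius `1 - ε² / 2`: centred at `ε u` when `ε² ≤ 1 / 2` and at `u / (2ε)` otherwise. Since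
`toSphere` measures a set of directions by the volume of its cone, the normalized measure of the
cap is at most `(1 - ε² / 2)^d ≤ exp (-d ε² / 2)`. The event `ε < |⟪u, b⟫|` is the union of the
caps around `u` and `-u`.
-/
open MeasureTheory Metric
open scoped RealInnerProductSpace

/-- The uniform probability measure on the unit sphere `S^{d-1} ⊆ ℝ^d`:
the rotation-invariant surface (cone) measure induced by Lebesgue measure,
normalized to be a probability measure. -/
noncomputable def uniformSphere (d : ℕ) :
    Measure (sphere (0 : EuclideanSpace ℝ (Fin d)) 1) :=
  ((volume : Measure (EuclideanSpace ℝ (Fin d))).toSphere Set.univ)⁻¹ •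
    (volume : Measure (EuclideanSpace ℝ (Fin d))).toSphere

open Set
open scoped Pointwise

section InnerProductSpace

variable {E : Type*} [NormedAddCommGroup E] [InnerProductSpace ℝ E]

theorem norm_smul_sub_smul_sq_le {u v : E} (hu : ‖u‖ = 1) (hv : ‖v‖ = 1) {ε t c : ℝ}
    (huv : ε ≤ ⟪u, v⟫) (ht₀ : 0 ≤ t) (ht₁ : t ≤ 1) (hc : 0 ≤ c) :
    ‖t • v - c • u‖ ^ 2 ≤ max (c ^ 2) (1 - 2 * c * ε + c ^ 2) := by
  have hnorm : ‖t • v - c • u‖ ^ 2 = t ^ 2 - 2 * t * c * ⟪u, v⟫ + c ^ 2 := by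
    rw [norm_sub_sq_real, real_inner_smul_left, real_inner_smul_right, norm_smul, norm_smul,
      real_inner_comm, hu, hv, Real.norm_of_nonneg ht₀, Real.norm_of_nonneg hc]
    ring
  -- the right-hand side is the value of the convex function `t ↦ t² - 2tcε + c²` at `t = 0` or `1`
  have hconvex : t ^ 2 - 2 * t * c * ε ≤ t * (1 - 2 * c * ε) := by nlinarith
  rcases le_total 0 (1 - 2 * c * ε) with h | h
  · rw [max_eq_right (by linarith)]
    nlinarith [mul_le_mul_of_nonneg_left huv (mul_nonneg ht₀ hc)]
  · rw [max_eq_left (by linarith)]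
    nlinarith [mul_le_mul_of_nonneg_left huv (mul_nonneg ht₀ hc)]

theorem exists_Ioo_smul_cap_subset_closedBall {u : E} (hu : ‖u‖ = 1) {ε : ℝ} (hε₀ : 0 < ε)
    (hε₁ : ε ≤ 1) :
    ∃ c : E, Ioo (0 : ℝ) 1 • {v ∈ sphere (0 : E) 1 | ε ≤ ⟪u, v⟫} ⊆
      closedBall c (1 - ε ^ 2 / 2) := by
  obtain ⟨c, hc, hmax⟩ :
      ∃ c : ℝ, 0 ≤ c ∧ max (c ^ 2) (1 - 2 * c * ε + c ^ 2) ≤ (1 - ε ^ 2 / 2) ^ 2 := by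
    rcases le_or_gt (ε ^ 2) (1 / 2) with hsmall | hlarge
    · exact ⟨ε, hε₀.le, max_le (by nlinarith) (by nlinarith)⟩
    · set c := 1 / (2 * ε)
      have hcε : 2 * c * ε = 1 := by simp only [c]; field_simp
      have hc : c ^ 2 ≤ (1 - ε ^ 2 / 2) ^ 2 := by
        have hε1 : ε ^ 2 ≤ 1 := by nlinarith
        -- `(2cε)² = 1 ≤ ε²(2 - ε²)²`, and `x(2 - x)² - 1 = (x - 1)(x² - 3x + 1)`
        have key : 1 ≤ ε ^ 2 * (2 - ε ^ 2) ^ 2 := by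
          nlinarith [mul_nonneg (sub_nonneg.2 hε1) (by nlinarith : 0 ≤ 3 * ε ^ 2 - ε ^ 4 - 1)]
        nlinarith
      exact ⟨c, by positivity, max_le hc (by rw [hcε]; linarith)⟩
  refine ⟨c • u, ?_⟩
  rintro _ ⟨t, ⟨ht₀, ht₁⟩, v, ⟨hv, huv⟩, rfl⟩
  rw [mem_closedBall, dist_eq_norm]
  refine le_of_sq_le_sq ((norm_smul_sub_smul_sq_le hu ?_ huv ht₀.le ht₁.le hc).trans hmax)
    (by nlinarith)
  simpa using hv

end InnerProductSpace

namespace MeasureTheory.Measure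

variable {E : Type*} [NormedAddCommGroup E] [NormedSpace ℝ E] [FiniteDimensional ℝ E]
  [MeasurableSpace E] [BorelSpace E]

theorem toSphere_le_of_Ioo_smul_subset_closedBall (μ : Measure E) [μ.IsAddHaarMeasure]
    {s : Set (sphere (0 : E) 1)} (hs : MeasurableSet s) {c : E} {r : ℝ} (hr : 0 ≤ r)
    (hsub : Ioo (0 : ℝ) 1 • ((↑) '' s) ⊆ closedBall c r) :
    μ.toSphere s ≤ ENNReal.ofReal (r ^ Module.finrank ℝ E) * μ.toSphere univ := by
  rw [toSphere_apply' μ hs, toSphere_apply_univ, mul_left_comm, ← addHaar_closedBall μ c hr]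
  gcongr

end MeasureTheory.Measure

theorem uniformSphere_cap_le (d : ℕ) {u : EuclideanSpace ℝ (Fin d)} (hu : ‖u‖ = 1) {ε : ℝ}
    (hε : 0 < ε) :
    uniformSphere d {b | ε < ⟪u, (b : EuclideanSpace ℝ (Fin d))⟫} ≤
      ENNReal.ofReal (Real.exp (-(d * ε ^ 2) / 2)) := by
  set s := {b : sphere (0 : EuclideanSpace ℝ (Fin d)) 1 | ε < ⟪u, (b : EuclideanSpace ℝ (Fin d))⟫}
  rcases lt_or_ge 1 ε with hε₁ | hε₁
  · suffices s = ∅ by simp [this]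
    refine eq_empty_of_forall_notMem fun b hb ↦ ?_
    have := real_inner_le_norm u (b : EuclideanSpace ℝ (Fin d))
    rw [hu, norm_eq_of_mem_sphere, mul_one] at this
    exact (hε₁.trans hb).not_ge this
  obtain ⟨c, hc⟩ := exists_Ioo_smul_cap_subset_closedBall hu hε hε₁
  have hs : MeasurableSet s := (isOpen_lt continuous_const (by fun_prop)).measurableSet
  have hsub : Ioo (0 : ℝ) 1 • ((↑) '' s) ⊆ closedBall c (1 - ε ^ 2 / 2) := by
    refine (smul_subset_smul_left ?_).trans hc
    rintro _ ⟨b, hb, rfl⟩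
    exact ⟨b.2, hb.le⟩
  have hr : 0 ≤ 1 - ε ^ 2 / 2 := by nlinarith
  set K := (volume : Measure (EuclideanSpace ℝ (Fin d))).toSphere univ
  calc uniformSphere d s = K⁻¹ * (volume : Measure (EuclideanSpace ℝ (Fin d))).toSphere s := rfl
    _ ≤ K⁻¹ * (ENNReal.ofReal ((1 - ε ^ 2 / 2) ^ d) * K) := by
      gcongr
      simpa only [finrank_euclideanSpace_fin] using
        Measure.toSphere_le_of_Ioo_smul_subset_closedBall volume hs hr hsub
    _ = ENNReal.ofReal ((1 - ε ^ 2 / 2) ^ d) * (K⁻¹ * K) := by ring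
    _ ≤ ENNReal.ofReal (Real.exp (-(ε ^ 2 / 2)) ^ d) := by
      refine mul_le_of_le_one_right' (ENNReal.inv_mul_le_one K) |>.trans ?_
      gcongr
      exact Real.one_sub_le_exp_neg _
    _ = ENNReal.ofReal (Real.exp (-(d * ε ^ 2) / 2)) := by
      rw [← Real.exp_nat_mul]
      ring_nf

theorem concentration_inner_uniformSphere_general
    (d : ℕ) (u : EuclideanSpace ℝ (Fin d)) (hu : ‖u‖ = 1)
    (ε : ℝ) (hε : 0 < ε) :
    uniformSphere d
        {b : sphere (0 : EuclideanSpace ℝ (Fin d)) 1 |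
          ε < |⟪u, (b : EuclideanSpace ℝ (Fin d))⟫|}
      ≤ ENNReal.ofReal (2 * Real.exp (-(((d : ℝ) - 1) * ε ^ 2) / 2)) := by
  have hsub : {b : sphere (0 : EuclideanSpace ℝ (Fin d)) 1 |
        ε < |⟪u, (b : EuclideanSpace ℝ (Fin d))⟫|} ⊆
      {b | ε < ⟪u, (b : EuclideanSpace ℝ (Fin d))⟫} ∪
        {b | ε < ⟪-u, (b : EuclideanSpace ℝ (Fin d))⟫} := by
    intro b (hb : ε < |_|)
    simpa only [mem_union, mem_ofPred_eq, inner_neg_left] using lt_abs.1 hb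
  have hexp : Real.exp (-(d * ε ^ 2) / 2) ≤ Real.exp (-(((d : ℝ) - 1) * ε ^ 2) / 2) := by
    gcongr
    linarith
  calc _ ≤ _ := measure_mono hsub
    _ ≤ _ := measure_union_le _ _
    _ ≤ ENNReal.ofReal (Real.exp (-(d * ε ^ 2) / 2)) +
          ENNReal.ofReal (Real.exp (-(d * ε ^ 2) / 2)) :=
      add_le_add (uniformSphere_cap_le d hu hε) (uniformSphere_cap_le d (by simpa) hε)
    _ ≤ ENNReal.ofReal (2 * Real.exp (-(((d : ℝ) - 1) * ε ^ 2) / 2)) := by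
      rw [← ENNReal.ofReal_add (by positivity) (by positivity), ← two_mul]
      gcongr

/-- Concentration of random directions: if `u` is a fixed unit vector in `ℝ^d` (`d ≥ 2`)
and `b` is uniformly distributed on the unit sphere, then for every `ε > 0`,
`P(|⟪u, b⟫| > ε) ≤ 2 * exp (-(d-1) * ε² / 2)`. -/
theorem concentration_inner_uniformSphere
    (d : ℕ) (hd : 2 ≤ d) (u : EuclideanSpace ℝ (Fin d)) (hu : ‖u‖ = 1)
    (ε : ℝ) (hε : 0 < ε) :
    uniformSphere d
        {b : sphere (0 : EuclideanSpace ℝ (Fin d)) 1 |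
          ε < |⟪u, (b : EuclideanSpace ℝ (Fin d))⟫|}
      ≤ ENNReal.ofReal (2 * Real.exp (-(((d : ℝ) - 1) * ε ^ 2) / 2)) :=
  concentration_inner_uniformSphere_general d u hu ε hε
end

section
/- Let d ≥ 1, μ, g ∈ ℝ^d, σ > 0, and let M : ℝ^d → ℝ^d be a linear map. Let Z and Z′ be independent random vectors in ℝ^d whose coordinates are independent and each distributed N(0, σ²) (i.e., each has the real Gaussian law with mean 0 and variance σ²), and set X = μ + Z and Y = μ + g + Z′. Then E[‖X + M X − Y‖²] = ‖Mμ − g‖² + σ²·‖I + M‖_F² + d·σ², where ‖·‖_F denotes the Frobenius norm (so ‖I + M‖_F² is the sum of the squares of all entries of the matrix of I + M in the standard basis). -/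
open MeasureTheory ProbabilityTheory

/-- The law of a random vector in `ℝ^d` whose coordinates are independent and each
distributed `N(0, σ²)`. -/
noncomputable def isoGaussian (d : ℕ) (σ : ℝ) : Measure (EuclideanSpace ℝ (Fin d)) :=
  Measure.map (MeasurableEquiv.toLp 2 (Fin d → ℝ))
    (Measure.pi fun _ : Fin d => gaussianReal 0 ⟨σ ^ 2, sq_nonneg σ⟩)

/-!
With `c = M μ - g` and `A = I + M` the residual is `c + A Z - Z'`, whose `i`-th coordinate is
`cᵢ + ⟪aᵢ, Z⟫ - ⟪eᵢ, Z'⟫` for the `i`-th row `aᵢ` of the matrix of `A`. Since `Z` and `Z'` are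
independent, centred and isotropic with variance `σ²`, this coordinate has mean `cᵢ` and variance
`σ² ‖aᵢ‖² + σ²`, so its second moment is `cᵢ² + σ² ‖aᵢ‖² + σ²`; summing over `i` gives the
identity.
-/

section Pi

variable {ι : Type*} [Fintype ι] {ρ : Measure ℝ} [IsProbabilityMeasure ρ]

lemma memLp_sum_mul_eval_pi (hρ : MemLp id 2 ρ) (a : ι → ℝ) :
    MemLp (fun z : ι → ℝ => ∑ j, a j * z j) 2 (Measure.pi fun _ => ρ) :=
  memLp_finsetSum _ fun j _ =>
    (hρ.comp_measurePreserving (measurePreserving_eval _ j)).const_mul (a j)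

lemma integral_sum_mul_eval_pi (hρ : Integrable id ρ) (a : ι → ℝ) :
    ∫ z, ∑ j, a j * z j ∂(Measure.pi fun _ : ι => ρ) = (∑ j, a j) * ∫ t, t ∂ρ := by
  rw [integral_finsetSum _ fun j _ => (integrable_eval hρ).const_mul (a j), Finset.sum_mul]
  simp_rw [integral_const_mul, integral_eval]

lemma variance_sum_mul_eval_pi (hρ : MemLp id 2 ρ) (a : ι → ℝ) :
    Var[fun z : ι → ℝ => ∑ j, a j * z j; Measure.pi fun _ => ρ] = (∑ j, a j ^ 2) * Var[id; ρ] := by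
  have h := variance_sum_pi (μ := fun _ : ι => ρ) (X := fun j t => a j * id t)
    fun j => hρ.const_mul (a j)
  rw [Finset.sum_mul]
  convert h using 2 with j
  · ext z; simp
  · exact (variance_const_mul _ _ _).symm

end Pi

lemma EuclideanSpace.inner_toLp_eq_sum {ι : Type*} [Fintype ι] (u : EuclideanSpace ℝ ι)
    (z : ι → ℝ) : inner ℝ u (WithLp.toLp 2 z) = ∑ j, u j * z j := by
  simp [PiLp.inner_apply, mul_comm]

lemma EuclideanSpace.linearMap_apply_eq_inner_toMatrix {ι κ : Type*} [Fintype ι] [DecidableEq ι]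
    [Fintype κ] (A : EuclideanSpace ℝ ι →ₗ[ℝ] EuclideanSpace ℝ κ) (x : EuclideanSpace ℝ ι)
    (i : κ) :
    A x i = inner ℝ (WithLp.toLp 2 (LinearMap.toMatrix (EuclideanSpace.basisFun ι ℝ).toBasis
      (EuclideanSpace.basisFun κ ℝ).toBasis A i)) x := by
  have h := congrFun (LinearMap.toMatrix_mulVec_repr (EuclideanSpace.basisFun ι ℝ).toBasis
      (EuclideanSpace.basisFun κ ℝ).toBasis A x) i
  simp only [OrthonormalBasis.coe_toBasis_repr_apply, EuclideanSpace.basisFun_repr] at h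
  rw [← h, PiLp.inner_apply]
  simp [Matrix.mulVec, dotProduct, mul_comm]

lemma integral_sq_add_prod {Ω Ω' : Type*} {mΩ : MeasurableSpace Ω} {mΩ' : MeasurableSpace Ω'}
    {μ : Measure Ω} {ν : Measure Ω'} [IsProbabilityMeasure μ] [IsProbabilityMeasure ν]
    {X : Ω → ℝ} {Y : Ω' → ℝ} (hX : MemLp X 2 μ) (hY : MemLp Y 2 ν) :
    ∫ p, (X p.1 + Y p.2) ^ 2 ∂(μ.prod ν) = Var[X; μ] + Var[Y; ν] + (μ[X] + ν[Y]) ^ 2 := by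
  have hXY : MemLp (fun p : Ω × Ω' => X p.1 + Y p.2) 2 (μ.prod ν) :=
    (hX.comp_fst ν).add (hY.comp_snd μ)
  have hmean : ∫ p, X p.1 + Y p.2 ∂(μ.prod ν) = μ[X] + ν[Y] := by
    rw [integral_add ((hX.integrable one_le_two).comp_fst ν)
      ((hY.integrable one_le_two).comp_snd μ), integral_fun_fst, integral_fun_snd]
    simp
  rw [← variance_add_prod hX hY, variance_eq_sub hXY, hmean]
  simp

section IsoGaussian

variable {d : ℕ} {σ : ℝ}

/- `⟨σ ^ 2, sq_nonneg σ⟩` in `isoGaussian` elaborates as a bare subtype, not as an `ℝ≥0`, which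
hides the instances and lemmas about `gaussianReal` from it; `Real.toNNReal` restores them. -/
lemma isoGaussian_eq_map_pi :
    isoGaussian d σ =
      (Measure.pi fun _ : Fin d => gaussianReal 0 (σ ^ 2).toNNReal).map (WithLp.toLp 2) := by
  rw [Real.toNNReal_of_nonneg (sq_nonneg σ)]
  rfl

instance isProbabilityMeasure_isoGaussian : IsProbabilityMeasure (isoGaussian d σ) := by
  rw [isoGaussian_eq_map_pi]
  exact Measure.isProbabilityMeasure_map (by fun_prop)

lemma memLp_inner_isoGaussian (u : EuclideanSpace ℝ (Fin d)) :
    MemLp (inner ℝ u) 2 (isoGaussian d σ) := by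
  rw [isoGaussian_eq_map_pi, memLp_map_measure_iff (by fun_prop) (by fun_prop)]
  convert memLp_sum_mul_eval_pi (memLp_id_gaussianReal 2) u.ofLp with z
  exact EuclideanSpace.inner_toLp_eq_sum u z

lemma integral_inner_isoGaussian (u : EuclideanSpace ℝ (Fin d)) :
    ∫ x, inner ℝ u x ∂(isoGaussian d σ) = 0 := by
  rw [isoGaussian_eq_map_pi, integral_map (by fun_prop) (by fun_prop)]
  simp_rw [EuclideanSpace.inner_toLp_eq_sum]
  rw [integral_sum_mul_eval_pi IsGaussian.integrable_id, integral_id_gaussianReal, mul_zero]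

lemma variance_inner_isoGaussian (u : EuclideanSpace ℝ (Fin d)) :
    Var[inner ℝ u; isoGaussian d σ] = σ ^ 2 * ‖u‖ ^ 2 := by
  rw [isoGaussian_eq_map_pi, variance_map (by fun_prop) (by fun_prop)]
  simp_rw [Function.comp_def, EuclideanSpace.inner_toLp_eq_sum]
  rw [variance_sum_mul_eval_pi (memLp_id_gaussianReal 2), variance_id_gaussianReal,
    EuclideanSpace.real_norm_sq_eq, Real.coe_toNNReal _ (sq_nonneg σ), mul_comm]

lemma integral_sq_add_inner_sub_inner_isoGaussian (c : ℝ) (u v : EuclideanSpace ℝ (Fin d)) :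
    ∫ p, (c + inner ℝ u p.1 - inner ℝ v p.2) ^ 2 ∂((isoGaussian d σ).prod (isoGaussian d σ))
      = c ^ 2 + σ ^ 2 * ‖u‖ ^ 2 + σ ^ 2 * ‖v‖ ^ 2 := by
  have hX : MemLp (fun x => c + inner ℝ u x) 2 (isoGaussian d σ) :=
    (memLp_const c).add (memLp_inner_isoGaussian u)
  have hY : MemLp (fun y => -inner ℝ v y) 2 (isoGaussian d σ) := (memLp_inner_isoGaussian v).neg
  simp_rw [sub_eq_add_neg]
  rw [integral_sq_add_prod hX hY, variance_const_add (by fun_prop),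
    variance_fun_neg, variance_inner_isoGaussian, variance_inner_isoGaussian,
    integral_add (integrable_const c) ((memLp_inner_isoGaussian u).integrable one_le_two),
    integral_neg, integral_const, integral_inner_isoGaussian, integral_inner_isoGaussian]
  simp only [probReal_univ, smul_eq_mul, one_mul, add_zero, neg_zero]
  ring

lemma integral_norm_sq_add_apply_sub_isoGaussian (c : EuclideanSpace ℝ (Fin d))
    (A : EuclideanSpace ℝ (Fin d) →ₗ[ℝ] EuclideanSpace ℝ (Fin d)) :
    ∫ p, ‖c + A p.1 - p.2‖ ^ 2 ∂((isoGaussian d σ).prod (isoGaussian d σ))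
      = ‖c‖ ^ 2
        + σ ^ 2 * (∑ i : Fin d, ∑ j : Fin d,
            (LinearMap.toMatrix (EuclideanSpace.basisFun (Fin d) ℝ).toBasis
              (EuclideanSpace.basisFun (Fin d) ℝ).toBasis A) i j ^ 2)
        + d * σ ^ 2 := by
  set a := LinearMap.toMatrix (EuclideanSpace.basisFun (Fin d) ℝ).toBasis
    (EuclideanSpace.basisFun (Fin d) ℝ).toBasis A
  have hcoord (p : EuclideanSpace ℝ (Fin d) × EuclideanSpace ℝ (Fin d)) :
      ‖c + A p.1 - p.2‖ ^ 2 = ∑ i, (c i + inner ℝ (WithLp.toLp 2 (a i)) p.1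
        - inner ℝ (EuclideanSpace.single i 1) p.2) ^ 2 := by
    simp only [EuclideanSpace.real_norm_sq_eq, PiLp.sub_apply, PiLp.add_apply,
      EuclideanSpace.linearMap_apply_eq_inner_toMatrix, EuclideanSpace.inner_single_left,
      map_one, one_mul, a]
  have hint (i : Fin d) : Integrable (fun p : EuclideanSpace ℝ (Fin d) × EuclideanSpace ℝ (Fin d) =>
      (c i + inner ℝ (WithLp.toLp 2 (a i)) p.1 - inner ℝ (EuclideanSpace.single i 1) p.2) ^ 2)
      ((isoGaussian d σ).prod (isoGaussian d σ)) :=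
    ((((memLp_const (c i)).add (memLp_inner_isoGaussian _)).comp_fst _).sub
      ((memLp_inner_isoGaussian _).comp_snd _)).integrable_sq
  simp_rw [hcoord]
  rw [integral_finsetSum _ fun i _ => hint i]
  simp_rw [integral_sq_add_inner_sub_inner_isoGaussian, EuclideanSpace.real_norm_sq_eq]
  simp [Finset.sum_add_distrib, Finset.mul_sum]

end IsoGaussian

theorem expected_alignment_loss_gaussian_translation_model_general
    (d : ℕ) (μv g : EuclideanSpace ℝ (Fin d)) (σ : ℝ)
    (M : EuclideanSpace ℝ (Fin d) →ₗ[ℝ] EuclideanSpace ℝ (Fin d))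
    {Ω : Type*} [MeasureSpace Ω] [IsProbabilityMeasure (ℙ : Measure Ω)]
    (Z Z' : Ω → EuclideanSpace ℝ (Fin d))
    (hZmeas : Measurable Z) (hZ'meas : Measurable Z')
    (hZ : Measure.map Z ℙ = isoGaussian d σ)
    (hZ' : Measure.map Z' ℙ = isoGaussian d σ)
    (hindep : IndepFun Z Z' ℙ) :
    ∫ ω, ‖(μv + Z ω) + M (μv + Z ω) - (μv + g + Z' ω)‖ ^ 2 ∂ℙ
      = ‖M μv - g‖ ^ 2
        + σ ^ 2 * (∑ i : Fin d, ∑ j : Fin d,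
            (LinearMap.toMatrix (EuclideanSpace.basisFun (Fin d) ℝ).toBasis
              (EuclideanSpace.basisFun (Fin d) ℝ).toBasis
              (LinearMap.id + M)) i j ^ 2)
        + d * σ ^ 2 := by
  set A : EuclideanSpace ℝ (Fin d) →ₗ[ℝ] EuclideanSpace ℝ (Fin d) := LinearMap.id + M
  have hlaw : HasLaw (fun ω => (Z ω, Z' ω)) ((isoGaussian d σ).prod (isoGaussian d σ)) :=
    hindep.hasLaw_prod ⟨hZmeas.aemeasurable, hZ⟩ ⟨hZ'meas.aemeasurable, hZ'⟩
  have hresidual (ω : Ω) :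
      (μv + Z ω) + M (μv + Z ω) - (μv + g + Z' ω) = (M μv - g) + A (Z ω) - Z' ω := by
    simp only [A, LinearMap.add_apply, LinearMap.id_apply, map_add]
    abel
  have hA : Continuous A := A.continuous_of_finiteDimensional
  simp_rw [hresidual]
  rw [← integral_norm_sq_add_apply_sub_isoGaussian]
  exact hlaw.integral_comp (f := fun p => ‖(M μv - g) + A p.1 - p.2‖ ^ 2)
    (by fun_prop : Continuous _).aestronglyMeasurable

/-- Expected alignment loss in the Gaussian translation model: if `X = μ + Z` and
`Y = μ + g + Z'` with `Z, Z'` independent and each having i.i.d. `N(0, σ²)` coordinates,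
and `M : ℝ^d → ℝ^d` is linear, then
`E[‖X + M X - Y‖²] = ‖M μ - g‖² + σ² ‖I + M‖_F² + d σ²`,
where `‖I + M‖_F²` is the sum of the squares of all entries of the matrix of `I + M`
in the standard basis. -/
theorem expected_alignment_loss_gaussian_translation_model
    (d : ℕ) (hd : 1 ≤ d) (μv g : EuclideanSpace ℝ (Fin d)) (σ : ℝ) (hσ : 0 < σ)
    (M : EuclideanSpace ℝ (Fin d) →ₗ[ℝ] EuclideanSpace ℝ (Fin d))
    {Ω : Type*} [MeasureSpace Ω] [IsProbabilityMeasure (ℙ : Measure Ω)]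
    (Z Z' : Ω → EuclideanSpace ℝ (Fin d))
    (hZmeas : Measurable Z) (hZ'meas : Measurable Z')
    (hZ : Measure.map Z ℙ = isoGaussian d σ)
    (hZ' : Measure.map Z' ℙ = isoGaussian d σ)
    (hindep : IndepFun Z Z' ℙ) :
    ∫ ω, ‖(μv + Z ω) + M (μv + Z ω) - (μv + g + Z' ω)‖ ^ 2 ∂ℙ
      = ‖M μv - g‖ ^ 2
        + σ ^ 2 * (∑ i : Fin d, ∑ j : Fin d,
            (LinearMap.toMatrix (EuclideanSpace.basisFun (Fin d) ℝ).toBasis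
              (EuclideanSpace.basisFun (Fin d) ℝ).toBasis
              (LinearMap.id + M)) i j ^ 2)
        + d * σ ^ 2 :=
  expected_alignment_loss_gaussian_translation_model_general d μv g σ M Z Z' hZmeas hZ'meas hZ hZ'
    hindep
end
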